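/- arXiv:2007.08698 — 8 statements merged into one kernel-verified Lean document; each statement's English description precedes it below -/
import Mathlib

section
/- Let $d, n, k$ be positive integers with $n - 1 \ge d \ge 1$ and $\frac{dn}{d+1} \le k \le n-1$. Define $F_{d,m} = \sum_{j=0}^{m-1} \lceil \frac{d}{d+1} j \rceil$ and $F_{d,n,k} = F_{d-1,k} + k(n-k)$. Then $F_{d,n,k} > F_{d,n,k+1}$. -/
/-!
Adding the `(k+1)`-st point to `V` adds the ceiling term `⌈(d-1)k/d⌉ = k - ⌊k/d⌋` and changes
`k(n-k)` by `n - 2k - 1`, so `F_{d,n,k} - F_{d,n,k+1} = k + ⌊k/d⌋ + 1 - n`. The threshold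
`dn ≤ (d+1)k` says `d(n-k) ≤ k`, i.e. `n - k ≤ ⌊k/d⌋`, which makes this difference positive.
-/

/-- `Fsum d m = ∑_{j=0}^{m-1} ⌈ d j / (d+1) ⌉`. -/
def Fsum (d m : ℕ) : ℤ := ∑ j ∈ Finset.range m, ⌈(d : ℚ) / (d + 1) * j⌉

/-- `Fcon d n k = F_{d-1,k} + k (n-k)`. -/
def Fcon (d n k : ℕ) : ℤ := Fsum (d - 1) k + (k : ℤ) * ((n : ℤ) - k)

theorem ceil_pred_div_mul_natCast {d : ℕ} (hd : 0 < d) (k : ℕ) :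
    ⌈((d - 1 : ℕ) : ℚ) / ((d - 1 : ℕ) + 1) * k⌉ = (k : ℤ) - (k : ℤ) / d := by
  have hcast : ((d - 1 : ℕ) : ℚ) = d - 1 := by rw [Nat.cast_sub hd, Nat.cast_one]
  have hsplit : ((d : ℚ) - 1) / d * k = -(((k : ℤ) : ℚ) / (d : ℕ)) + ((k : ℤ) : ℚ) := by
    have : (d : ℚ) ≠ 0 := by positivity
    field_simp
    push_cast
    ring
  rw [hcast, sub_add_cancel, hsplit, Int.ceil_add_intCast, Int.ceil_neg, Rat.floor_intCast_div_natCast]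
  ring

theorem Fsum_pred_succ {d : ℕ} (hd : 0 < d) (k : ℕ) :
    Fsum (d - 1) (k + 1) = Fsum (d - 1) k + ((k : ℤ) - (k : ℤ) / d) := by
  rw [Fsum, Finset.sum_range_succ, ceil_pred_div_mul_natCast hd]
  rfl

theorem Fcon_sub_Fcon_succ {d : ℕ} (hd : 0 < d) (n k : ℕ) :
    Fcon d n k - Fcon d n (k + 1) = (k : ℤ) + (k : ℤ) / d + 1 - n := by
  rw [Fcon, Fcon, Fsum_pred_succ hd]
  push_cast
  ring

theorem sub_le_ediv_of_mul_le_succ_mul {d n k : ℤ} (hd : 0 < d) (h : d * n ≤ (d + 1) * k) :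
    n - k ≤ k / d :=
  (Int.le_ediv_iff_mul_le hd).mpr (by linarith)

theorem stmt3_general (d n k : ℕ) (hd : 1 ≤ d)
    (hk1 : (d * n : ℚ) / (d + 1) ≤ k) :
    Fcon d n (k + 1) < Fcon d n k := by
  have hthreshold : (d : ℤ) * n ≤ (d + 1) * k := by
    rw [div_le_iff₀ (by positivity)] at hk1
    exact_mod_cast (by linarith : (d : ℚ) * n ≤ (d + 1) * k)
  have hgap := sub_le_ediv_of_mul_le_succ_mul (by exact_mod_cast hd) hthreshold
  have hdiff := Fcon_sub_Fcon_succ hd n k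
  linarith

theorem stmt3 (d n k : ℕ) (hd : 1 ≤ d) (hdn : d ≤ n - 1)
    (hk1 : (d * n : ℚ) / (d + 1) ≤ k) (hk2 : k ≤ n - 1) :
    Fcon d n (k + 1) < Fcon d n k :=
  stmt3_general d n k hd hk1
end

section
/- Let $d, n$ be positive integers with $d \ge 1$ and $n \ge d+1$. Define $F_{d,m} = \sum_{j=0}^{m-1} \lceil \frac{d}{d+1} j \rceil$ and $F_{d,n,k} = F_{d-1,k} + k(n-k)$ (with $F_{0,m} = 0$). Then $F_{d,n,\lfloor \frac{dn}{d+1} \rfloor} = F_{d,n,\lceil \frac{dn}{d+1} \rceil}$. -/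
/-!
Write `d n = (d + 1) k + r` with `0 ≤ r ≤ d`. If `r = 0` the floor and the ceiling agree.
Otherwise they are `k` and `k + 1`, and `F_{d,n,k+1} - F_{d,n,k} = ⌈(d-1) k / d⌉ + n - 2k - 1`.
Since `⌈(d-1) k / d⌉ = k - ⌊k / d⌋` and `k = d (n - k - 1) + (d - r)` with `0 ≤ d - r < d`,
we get `⌊k / d⌋ = n - k - 1`, so the difference vanishes.
-/

theorem Nat.ceil_natCast_div_natCast_of_mod_pos {a b : ℕ} (hb : 0 < b) (h : 0 < a % b) :
    ⌈(a : ℚ) / b⌉₊ = a / b + 1 := by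
  have hdiv := Nat.div_add_mod a b
  have hlt := Nat.mod_lt a hb
  rw [Nat.ceil_eq_iff (Nat.add_one_ne_zero _), Nat.add_sub_cancel, lt_div_iff₀ (by positivity),
    div_le_iff₀ (by positivity)]
  constructor <;> norm_cast <;> nlinarith

theorem ceil_div_succ_mul (e k : ℕ) :
    ⌈(e : ℚ) / (e + 1) * k⌉ = k - (k / (e + 1) : ℕ) := by
  have h : (e : ℚ) / (e + 1) * k = k + -((k : ℚ) / ((e + 1 : ℕ) : ℚ)) := by
    push_cast
    field_simp
    ring
  rw [h, Int.ceil_natCast_add, Int.ceil_neg, Rat.floor_natCast_div_natCast]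
  push_cast
  ring

theorem Fcon_succ (e n k : ℕ) :
    Fcon (e + 1) n (k + 1) = Fcon (e + 1) n k + ⌈(e : ℚ) / (e + 1) * k⌉ + n - 2 * k - 1 := by
  simp only [Fcon, Fsum, Nat.add_sub_cancel, Finset.sum_range_succ]
  push_cast
  ring

theorem div_add_add_one_eq_of_mul_eq {d n k r : ℕ} (h : d * n = (d + 1) * k + r) (hr : 0 < r)
    (hrd : r ≤ d) : k / d + k + 1 = n := by
  obtain ⟨i, rfl⟩ : ∃ i, n = k + 1 + i := ⟨n - k - 1, by
    have : k < n := by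
      by_contra! hn
      nlinarith [Nat.mul_le_mul_left d hn]
    omega⟩
  have hi : d * i + d = k + r := by linarith
  rw [Nat.div_eq_of_lt_le (by linarith) (by linarith)]
  ring

theorem stmt4_general (d n : ℕ) :
    Fcon d n ⌊(d * n : ℚ) / (d + 1)⌋₊ = Fcon d n ⌈(d * n : ℚ) / (d + 1)⌉₊ := by
  rw [show (d * n : ℚ) / (d + 1) = ((d * n : ℕ) : ℚ) / ((d + 1 : ℕ) : ℚ) by push_cast; rfl]
  rcases Nat.eq_zero_or_pos (d * n % (d + 1)) with hdvd | hr
  · rw [← Nat.cast_div (Nat.dvd_of_mod_eq_zero hdvd) (by positivity), Nat.floor_natCast,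
      Nat.ceil_natCast]
  obtain ⟨e, rfl⟩ : ∃ e, d = e + 1 :=
    Nat.exists_eq_add_one.mpr (Nat.pos_of_ne_zero (by rintro rfl; simp at hr))
  have hq := div_add_add_one_eq_of_mul_eq (Nat.div_add_mod _ _).symm hr
    (Nat.le_of_lt_succ (Nat.mod_lt _ (Nat.succ_pos _)))
  rw [Nat.floor_div_eq_div, Nat.ceil_natCast_div_natCast_of_mod_pos (Nat.succ_pos _) hr, Fcon_succ,
    ceil_div_succ_mul]
  generalize (e + 1) * n / (e + 1 + 1) = k at hq ⊢
  have hqZ : ((k / (e + 1) : ℕ) : ℤ) + k + 1 = n := by exact_mod_cast hq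
  linarith

theorem stmt4 (d n : ℕ) (hd : 1 ≤ d) (hn : d + 1 ≤ n) :
    Fcon d n ⌊(d * n : ℚ) / (d + 1)⌋₊ = Fcon d n ⌈(d * n : ℚ) / (d + 1)⌉₊ :=
  stmt4_general d n
end

section
/- Let $d, n, k$ be positive integers with $n - 1 \ge d \ge 1$ and $\frac{dn}{d+1} \le k \le n-1$. Define $F_{d,m} = \sum_{j=0}^{m-1} \lceil \frac{d}{d+1} j \rceil$ (with $F_{0,m} = 0$) and $F_{d,n,k} = F_{d-1,k} + k(n-k)$. Then $F_{d,n-k} + F_{d-1,n} < F_{d,n,k}$. -/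
/-! Write `r = n - k`; the hypothesis on `k` says `d r ≤ k`. Since `⌈e j / (e + 1)⌉ ≤ j - r`
whenever `(e + 1) r ≤ j`, each of the `r` terms `⌈(d - 1) j / d⌉`, `k ≤ j < n`, by which
`F_{d-1,n}` exceeds `F_{d-1,k}` is at most `j - r`, while `F_{d,r} ≤ ∑_{j<r} j`. Adding up with
Gauss's formula bounds the left-hand side by `F_{d-1,k} + k r - r`. -/

open Finset

lemma ceil_div_succ_mul_le_sub {d j r : ℕ} (h : (d + 1) * r ≤ j) :
    ⌈(d : ℚ) / (d + 1) * j⌉ ≤ (j : ℤ) - r := by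
  have h' : ((d : ℚ) + 1) * r ≤ j := by exact_mod_cast h
  rw [Int.ceil_le, div_mul_eq_mul_div, div_le_iff₀ (by positivity)]
  push_cast
  linarith

lemma Fsum_le_sum_range (d m : ℕ) : Fsum d m ≤ ∑ j ∈ range m, (j : ℤ) :=
  sum_le_sum fun j _ => by simpa using ceil_div_succ_mul_le_sub (d := d) (j := j) (r := 0) (by simp)

lemma Fsum_add (d k r : ℕ) :
    Fsum d (k + r) = Fsum d k + ∑ j ∈ range r, ⌈(d : ℚ) / (d + 1) * (k + j : ℕ)⌉ :=
  sum_range_add _ k r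

lemma Fsum_add_le {d k r : ℕ} (h : (d + 1) * r ≤ k) :
    Fsum d (k + r) ≤ Fsum d k + k * r + ∑ j ∈ range r, (j : ℤ) - r * r := by
  have hterm : ∀ j ∈ range r, ⌈(d : ℚ) / (d + 1) * (k + j : ℕ)⌉ ≤ (k : ℤ) + j - r :=
    fun j _ => by simpa using ceil_div_succ_mul_le_sub (d := d) (j := k + j) (r := r) (by omega)
  have htail := sum_le_sum hterm
  simp only [sum_sub_distrib, sum_add_distrib, sum_const, card_range, nsmul_eq_mul] at htail
  rw [Fsum_add]
  linarith

lemma two_mul_sum_range_intCast (r : ℕ) : 2 * ∑ j ∈ range r, (j : ℤ) = r * r - r := by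
  induction r with
  | zero => simp
  | succ r ih =>
    rw [sum_range_succ, mul_add, ih]
    push_cast
    ring

theorem stmt5 (d n k : ℕ) (hd : 1 ≤ d) (hdn : d ≤ n - 1)
    (hk1 : (d * n : ℚ) / (d + 1) ≤ k) (hk2 : k ≤ n - 1) :
    Fsum d (n - k) + Fsum (d - 1) n < Fcon d n k := by
  obtain ⟨e, rfl⟩ : ∃ e, d = e + 1 := ⟨d - 1, by omega⟩
  obtain ⟨r, rfl⟩ : ∃ r, n = k + r := ⟨n - k, by omega⟩
  have hr : 1 ≤ r := by omega
  have hrk : (e + 1) * r ≤ k := by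
    rw [div_le_iff₀ (by positivity)] at hk1
    have : ((e + 1 : ℕ) : ℚ) * r ≤ k := by push_cast at hk1 ⊢; linarith
    exact_mod_cast this
  have hhead := Fsum_le_sum_range (e + 1) r
  have htail := Fsum_add_le hrk
  have hgauss := two_mul_sum_range_intCast r
  simp only [Fcon, Nat.add_sub_cancel, Nat.add_sub_cancel_left] at htail ⊢
  push_cast
  linarith
end

section
/- Let $d \ge 1$, $n \ge d+1$, and set $k = \lceil \frac{dn}{d+1} \rceil$. Define $e(n,k) = \sum_{m=k}^{n-1} \left( \lceil \frac{d-1}{d} m \rceil - \frac{d-1}{d} m \right)$. Then the average error satisfies $\frac{e(n,k)}{n-k} < \frac{d}{2(d+1)} + k - \frac{dn}{d+1}$. -/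
/-!
Write `n = (d + 1) ℓ + r` with `r ≤ d`; then `k = d ℓ + r`, `n - k = ℓ`, and the right-hand side
equals `(d + 2 r) / (2 (d + 1))`. Since `(d - 1) m / d = m - m / d`, the error at `m` is
`fract (m / d) = (m mod d) / d`. From `2 ∑_{i < N} (i mod d) = N (d - 1) - p (d - p)`, `p = N mod d`,
any `ℓ` consecutive residues starting at `a` sum to at most `ℓ (d - 1 + a mod d) / 2`, so the
average error is at most `(d - 1 + r) / (2 d)`, which is `< (d + 2 r) / (2 (d + 1))`.
-/

open Finset

section Rounding

variable {K : Type*} [Field K] [LinearOrder K] [IsStrictOrderedRing K]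

theorem natCeil_natCast_sub [FloorSemiring K] (N : ℕ) {f : K} (hf₀ : 0 ≤ f) (hf₁ : f < 1) :
    ⌈(N : K) - f⌉₊ = N := by
  refine le_antisymm (Nat.ceil_le.2 (by linarith)) ?_
  rcases N with _ | N
  · exact Nat.zero_le _
  · exact Nat.lt_ceil.2 (by push_cast; linarith)

theorem natCeil_mul_div_add_one [FloorSemiring K] (d n : ℕ) :
    ⌈(d * n : K) / (d + 1)⌉₊ = n - n / (d + 1) := by
  have hd : (0 : K) < d + 1 := by positivity
  have hr : ((n % (d + 1) : ℕ) : K) < d + 1 := by exact_mod_cast Nat.mod_lt n d.succ_pos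
  have hn : (n : K) = (d + 1) * (n / (d + 1) : ℕ) + (n % (d + 1) : ℕ) := by
    exact_mod_cast (Nat.div_add_mod n (d + 1)).symm
  have hsplit : (d * n : K) / (d + 1)
      = ((n - n / (d + 1) : ℕ) : K) - (n % (d + 1) : ℕ) / (d + 1) := by
    rw [Nat.cast_sub (Nat.div_le_self n (d + 1))]
    field_simp
    rw [hn]
    ring
  rw [hsplit, natCeil_natCast_sub _ (by positivity) ((div_lt_one hd).2 hr)]

theorem ceil_sub_self_eq_mod_div [FloorRing K] {d : ℕ} (hd : d ≠ 0) (m : ℕ) :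
    (⌈((d : K) - 1) / d * m⌉ : K) - ((d : K) - 1) / d * m = ((m % d : ℕ) : K) / d := by
  have hsplit : ((d : K) - 1) / d * m = -((m : K) / d) + m := by
    field_simp
    ring
  rw [hsplit, Int.ceil_add_natCast, Int.ceil_neg, ← Int.fract_div_natCast_eq_div_natCast_mod,
    Int.fract]
  push_cast
  ring

end Rounding

section ResidueSums

variable {d : ℕ}

theorem two_mul_sum_range_mod_add (hd : 0 < d) (N : ℕ) :
    2 * ∑ i ∈ range N, i % d + N % d * (d - N % d) = N * (d - 1) := by
  induction N with
  | zero => simp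
  | succ N ih =>
    rw [sum_range_succ]
    obtain ⟨q, p, hp, rfl⟩ : ∃ q p, p < d ∧ N = d * q + p :=
      ⟨N / d, N % d, Nat.mod_lt N hd, (Nat.div_add_mod N d).symm⟩
    rw [Nat.mul_add_mod, Nat.mod_eq_of_lt hp] at ih ⊢
    rcases Nat.lt_or_ge (p + 1) d with hp1 | hp1
    · rw [add_assoc, Nat.mul_add_mod, Nat.mod_eq_of_lt hp1]
      obtain ⟨e, rfl⟩ : ∃ e, d = p + e + 2 := ⟨d - p - 2, by omega⟩
      rw [show p + e + 2 - p = e + 2 by omega, show p + e + 2 - (p + 1) = e + 1 by omega,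
        show p + e + 2 - 1 = p + e + 1 by omega] at *
      nlinarith [ih]
    · obtain rfl : d = p + 1 := by omega
      rw [add_assoc, ← mul_add_one, Nat.mul_mod_right]
      rw [show p + 1 - p = 1 by omega, Nat.add_sub_cancel] at *
      nlinarith [ih]

theorem two_mul_sum_Ico_mod_le (hd : 0 < d) (a ℓ : ℕ) :
    2 * ∑ i ∈ Ico a (a + ℓ), i % d ≤ ℓ * (d - 1 + a % d) := by
  have hsum := sum_range_add_sum_Ico (fun i => i % d) (Nat.le_add_right a ℓ)
  have ha := two_mul_sum_range_mod_add hd a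
  have hb := two_mul_sum_range_mod_add hd (a + ℓ)
  have hp := Nat.mod_lt a hd
  have hq := Nat.mod_lt (a + ℓ) hd
  rw [← hsum] at hb
  rcases Nat.lt_or_ge (a % d + ℓ) d with hwrap | hwrap
  · have hq' : (a + ℓ) % d = a % d + ℓ := by
      rw [Nat.add_mod, Nat.mod_eq_of_lt (by omega : ℓ < d), Nat.mod_eq_of_lt (by omega)]
    rw [hq'] at hb
    generalize a % d = p at *
    zify [hd, hp.le, hwrap.le] at *
    nlinarith
  · generalize a % d = p at *
    generalize (a + ℓ) % d = q at *
    zify [hd, hp.le, hq.le] at *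
    nlinarith [mul_le_mul_of_nonneg_left (by omega : (d : ℤ) - p ≤ ℓ) (by positivity : (0 : ℤ) ≤ p),
      mul_nonneg (by positivity : (0 : ℤ) ≤ q) (by omega : (0 : ℤ) ≤ d - q)]

end ResidueSums

theorem div_div_lt_of_two_mul_le {K : Type*} [Field K] [LinearOrder K] [IsStrictOrderedRing K]
    {S d ℓ r : ℕ} (hd : 1 ≤ d) (hS : 2 * S ≤ ℓ * (d - 1 + r)) :
    (S : K) / d / ℓ < (d + 2 * r) / (2 * (d + 1)) := by
  have hd₀ : (1 : K) ≤ d := by exact_mod_cast hd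
  have hSK : 2 * (S : K) ≤ ℓ * (d - 1 + r) := by
    have := Nat.cast_le (α := K) |>.2 hS
    push_cast [Nat.cast_sub hd] at this
    exact this
  calc (S : K) / d / ℓ ≤ ((d : K) - 1 + r) / (2 * d) := by
        refine div_le_of_le_mul₀ (by positivity) (by positivity) ?_
        field_simp
        linarith
    _ < _ := by
        rw [div_lt_div_iff₀ (by positivity) (by positivity)]
        nlinarith [mul_nonneg (Nat.cast_nonneg r : (0 : K) ≤ r) (sub_nonneg.2 hd₀)]

theorem stmt6_general (d n : ℕ) (hd : 1 ≤ d) :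
    letI k : ℕ := ⌈(d * n : ℚ) / (d + 1)⌉₊
    (∑ m ∈ Finset.Ico k n,
        ((⌈((d : ℚ) - 1) / d * m⌉ : ℚ) - ((d : ℚ) - 1) / d * m)) / ((n : ℚ) - k) <
      (d : ℚ) / (2 * (d + 1)) + k - (d * n : ℚ) / (d + 1) := by
  set k := ⌈(d * n : ℚ) / (d + 1)⌉₊ with hk
  have hdiv := Nat.div_add_mod n (d + 1)
  set ℓ := n / (d + 1)
  set r := n % (d + 1)
  have hn : n = d * ℓ + r + ℓ := by linarith
  have hkℓ : k = d * ℓ + r := by rw [hk, natCeil_mul_div_add_one]; omega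
  have hkmod : k % d ≤ r := by rw [hkℓ, Nat.mul_add_mod]; exact Nat.mod_le r d
  have hsum : ∑ m ∈ Ico k n, ((⌈((d : ℚ) - 1) / d * m⌉ : ℚ) - ((d : ℚ) - 1) / d * m)
      = ((∑ m ∈ Ico k (k + ℓ), m % d : ℕ) : ℚ) / d := by
    rw [show n = k + ℓ by omega, Nat.cast_sum, sum_div]
    exact sum_congr rfl fun m _ => ceil_sub_self_eq_mod_div (by omega) m
  have hlen : (n : ℚ) - k = ℓ := by
    rw [hn, hkℓ]
    push_cast
    ring
  have hrhs : (d : ℚ) / (2 * (d + 1)) + k - (d * n : ℚ) / (d + 1)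
      = (d + 2 * r : ℚ) / (2 * (d + 1)) := by
    rw [hkℓ, hn]
    push_cast
    field_simp
    ring
  rw [hsum, hlen, hrhs]
  exact div_div_lt_of_two_mul_le hd ((two_mul_sum_Ico_mod_le hd k ℓ).trans
    (Nat.mul_le_mul_left ℓ (Nat.add_le_add_left hkmod _)))

theorem stmt6 (d n : ℕ) (hd : 1 ≤ d) (hn : d + 1 ≤ n) :
    letI k : ℕ := ⌈(d * n : ℚ) / (d + 1)⌉₊
    (∑ m ∈ Finset.Ico k n,
        ((⌈((d : ℚ) - 1) / d * m⌉ : ℚ) - ((d : ℚ) - 1) / d * m)) / ((n : ℚ) - k) <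
      (d : ℚ) / (2 * (d + 1)) + k - (d * n : ℚ) / (d + 1) :=
  stmt6_general d n hd
end

section
/- Let $A$ be a $(d+1) \times (d+1)$ symmetric matrix with rational entries, and let $\Delta_d = \{x \in \mathbb{R}^{d+1} : \sum_i x_i = 1, \; x_i \ge 0\}$ be the standard simplex. Then the quadratic form $f(x) = \frac{1}{2} x^T A x$ attains its maximum over $\Delta_d$ at some point with all rational coordinates. -/
/-!
Among the maximizers of `Q y = yᵀ A y` on the simplex pick one, `x`, of minimal support `S`.
First-order optimality makes `A x` constant on `S`. If `u ≠ 0` is supported in `S`, has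
coordinate sum `0` and `A u` constant on `S`, then `Q` is constant on the line `x + t u`, and
following that line to the boundary of the face of `S` gives a maximizer of smaller support.
Hence `x` is the unique solution of the linear system "support in `S`, coordinate sum `1`,
`A y` constant on `S`", whose coefficients are rational. Applying a `ℚ`-linear retraction
`ℝ → ℚ` coordinatewise maps `x` to a rational solution of the same system, so `x` is rational.
-/

open scoped Matrix
open Finset Function Filter Topology

variable {ι : Type*} [Fintype ι]

theorem Matrix.IsSymm.dotProduct_mulVec_comm {R : Type*} [CommSemiring R] {A : Matrix ι ι R}
    (hA : A.IsSymm) (x v : ι → R) : x ⬝ᵥ A *ᵥ v = v ⬝ᵥ A *ᵥ x := by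
  rw [Matrix.dotProduct_mulVec, ← Matrix.mulVec_transpose, hA.eq, dotProduct_comm]

theorem Matrix.IsSymm.dotProduct_mulVec_add_smul {R : Type*} [CommRing R] {A : Matrix ι ι R}
    (hA : A.IsSymm) (x v : ι → R) (t : R) :
    (x + t • v) ⬝ᵥ A *ᵥ (x + t • v) =
      x ⬝ᵥ A *ᵥ x + 2 * t * (v ⬝ᵥ A *ᵥ x) + t ^ 2 * (v ⬝ᵥ A *ᵥ v) := by
  simp only [Matrix.mulVec_add, Matrix.mulVec_smul, add_dotProduct, dotProduct_add,
    smul_dotProduct, dotProduct_smul, smul_eq_mul, hA.dotProduct_mulVec_comm x v]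
  ring

theorem dotProduct_eq_zero_of_sum_eq_zero {R : Type*} [CommSemiring R] {u w : ι → R} {c : R}
    (hu : ∑ i, u i = 0) (hw : ∀ i ∈ support u, w i = c) : u ⬝ᵥ w = 0 := calc
  u ⬝ᵥ w = ∑ i, u i * c := sum_congr rfl fun i _ => by
    by_cases hi : u i = 0
    · simp [hi]
    · rw [hw i hi]
  _ = 0 := by rw [← sum_mul, hu, zero_mul]

theorem add_smul_mem_stdSimplex {𝕜 : Type*} [Ring 𝕜] [PartialOrder 𝕜] {x v : ι → 𝕜} {t : 𝕜}
    (hx : x ∈ stdSimplex 𝕜 ι) (hv : ∑ i, v i = 0) (hnonneg : ∀ i, 0 ≤ x i + t * v i) :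
    x + t • v ∈ stdSimplex 𝕜 ι :=
  ⟨hnonneg, by simp [sum_add_distrib, ← mul_sum, hx.2, hv]⟩

theorem nonpos_of_forall_mul_add_mul_sq_nonpos {a b ε : ℝ} (hε : 0 < ε)
    (h : ∀ t ∈ Set.Ioc 0 ε, a * t + b * t ^ 2 ≤ 0) : a ≤ 0 := by
  have hlim : Tendsto (fun t => a + b * t) (𝓝[>] 0) (𝓝 a) := by
    have hcont : Continuous fun t : ℝ => a + b * t := by fun_prop
    simpa using (hcont.tendsto 0).mono_left nhdsWithin_le_nhds
  refine le_of_tendsto hlim ?_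
  filter_upwards [Ioc_mem_nhdsGT hε] with t ht
  nlinarith [h t ht, ht.1]

theorem exists_ratLinearMap_apply_ratCast : ∃ π : ℝ →ₗ[ℚ] ℚ, ∀ q : ℚ, π q = q := by
  obtain ⟨π, hπ⟩ := (Algebra.linearMap ℚ ℝ).exists_leftInverse_of_injective
    (LinearMap.ker_eq_bot.mpr (algebraMap ℚ ℝ).injective)
  exact ⟨π, fun q => by simpa using LinearMap.congr_fun hπ q⟩

theorem mulVec_ratLinearMap_apply (π : ℝ →ₗ[ℚ] ℚ) {A : Matrix ι ι ℝ}
    (hA : ∀ i j, ∃ q : ℚ, A i j = q) (x : ι → ℝ) (i : ι) :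
    (A *ᵥ fun j => (π (x j) : ℝ)) i = π ((A *ᵥ x) i) := by
  choose q hq using hA
  simp only [Matrix.mulVec, dotProduct, hq, map_sum, Rat.cast_sum]
  refine sum_congr rfl fun j _ => ?_
  rw [← Rat.cast_mul, ← smul_eq_mul, ← map_smul, Rat.smul_def]

theorem mulVec_apply_le_of_isMaxOn {A : Matrix ι ι ℝ} (hA : A.IsSymm) {x : ι → ℝ}
    (hx : x ∈ stdSimplex ℝ ι) (hmax : IsMaxOn (fun y => y ⬝ᵥ A *ᵥ y) (stdSimplex ℝ ι) x)
    (i : ι) {j : ι} (hj : 0 < x j) : (A *ᵥ x) i ≤ (A *ᵥ x) j := by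
  classical
  obtain rfl | hij := eq_or_ne i j
  · rfl
  set v : ι → ℝ := Pi.single i 1 - Pi.single j 1
  have hv : ∑ k, v k = 0 := by simp [v]
  have hvx : v ⬝ᵥ A *ᵥ x = (A *ᵥ x) i - (A *ᵥ x) j := by simp [v, sub_dotProduct]
  rw [← sub_nonpos, ← hvx]
  refine nonpos_of_forall_mul_add_mul_sq_nonpos (b := v ⬝ᵥ A *ᵥ v / 2) hj fun t ht => ?_
  have hmem : x + t • v ∈ stdSimplex ℝ ι := add_smul_mem_stdSimplex hx hv fun k => by
    obtain rfl | hkj := eq_or_ne k j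
    · simp only [v, Pi.sub_apply, Pi.single_eq_of_ne' hij, Pi.single_eq_same]
      linarith [ht.2]
    · have : 0 ≤ v k := by by_cases hki : k = i <;> simp [v, hki, hkj, hij]
      nlinarith [hx.1 k, ht.1]
  have hle : (x + t • v) ⬝ᵥ A *ᵥ (x + t • v) ≤ x ⬝ᵥ A *ᵥ x := hmax hmem
  rw [hA.dotProduct_mulVec_add_smul] at hle
  linarith

theorem exists_mulVec_eq_const_of_isMaxOn {A : Matrix ι ι ℝ} (hA : A.IsSymm) {x : ι → ℝ}
    (hx : x ∈ stdSimplex ℝ ι) (hmax : IsMaxOn (fun y => y ⬝ᵥ A *ᵥ y) (stdSimplex ℝ ι) x) :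
    ∃ c, ∀ i ∈ support x, (A *ᵥ x) i = c := by
  have hpos : ∀ i ∈ support x, 0 < x i := fun i hi => (hx.1 i).lt_of_ne' hi
  obtain ⟨j, -, hj⟩ := exists_ne_zero_of_sum_ne_zero (hx.2.trans_ne one_ne_zero)
  exact ⟨_, fun i hi => (mulVec_apply_le_of_isMaxOn hA hx hmax i (hpos j hj)).antisymm
    (mulVec_apply_le_of_isMaxOn hA hx hmax j (hpos i hi))⟩

theorem exists_add_smul_mem_stdSimplex_support_ssubset {x u : ι → ℝ} (hx : x ∈ stdSimplex ℝ ι)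
    (hu0 : u ≠ 0) (hu : ∑ i, u i = 0) (hsupp : support u ⊆ support x) :
    ∃ t : ℝ, x + t • u ∈ stdSimplex ℝ ι ∧ support (x + t • u) ⊂ support x := by
  classical
  obtain ⟨i, hi⟩ : ∃ i, u i < 0 := by
    by_contra! h
    exact hu0 (funext fun i => (Fintype.sum_eq_zero_iff_of_nonneg h).mp hu ▸ rfl)
  obtain ⟨k, hk, hkmin⟩ := exists_min_image {i | u i < 0} (fun i => x i / -u i) ⟨i, by simpa⟩
  simp only [mem_filter_univ] at hk hkmin
  have hxk : 0 < x k := (hx.1 k).lt_of_ne' (hsupp hk.ne)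
  -- ratio test: `x k / -u k` is the largest step keeping `x + t • u` nonnegative
  have hsub : support (x + (x k / -u k) • u) ⊆ support x := fun l hl hxl => hl <| by
    simp [hxl, notMem_support.mp fun h => hsupp h hxl]
  refine ⟨x k / -u k, add_smul_mem_stdSimplex hx hu fun l => ?_,
    (Set.ssubset_iff_of_subset hsub).mpr ⟨k, hxk.ne', ?_⟩⟩
  · rcases lt_or_ge (u l) 0 with hl | hl
    · have := (le_div_iff₀ (neg_pos.mpr hl)).mp (hkmin l hl)
      rw [mul_neg] at this
      linarith
    · have := div_nonneg hxk.le (neg_nonneg.mpr hk.le)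
      nlinarith [hx.1 l]
  · simp [div_neg, hk.ne]

theorem exists_isMaxOn_support_ssubset {A : Matrix ι ι ℝ} (hA : A.IsSymm) {x u : ι → ℝ}
    (hx : x ∈ stdSimplex ℝ ι) (hmax : IsMaxOn (fun y => y ⬝ᵥ A *ᵥ y) (stdSimplex ℝ ι) x)
    (hu0 : u ≠ 0) (hu : ∑ i, u i = 0) (hsupp : support u ⊆ support x)
    (hQ : u ⬝ᵥ A *ᵥ u = 0) :
    ∃ y ∈ stdSimplex ℝ ι, IsMaxOn (fun y => y ⬝ᵥ A *ᵥ y) (stdSimplex ℝ ι) y ∧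
      support y ⊂ support x := by
  obtain ⟨c, hc⟩ := exists_mulVec_eq_const_of_isMaxOn hA hx hmax
  have hux : u ⬝ᵥ A *ᵥ x = 0 :=
    dotProduct_eq_zero_of_sum_eq_zero hu fun i hi => hc i (hsupp hi)
  obtain ⟨t, hy, hyx⟩ := exists_add_smul_mem_stdSimplex_support_ssubset hx hu0 hu hsupp
  refine ⟨x + t • u, hy, fun z hz => ?_, hyx⟩
  simpa [hA.dotProduct_mulVec_add_smul, hux, hQ] using hmax hz

theorem eq_of_minimalFor_isMaxOn {A : Matrix ι ι ℝ} (hA : A.IsSymm) {x : ι → ℝ}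
    (hmin : MinimalFor (fun y => y ∈ stdSimplex ℝ ι ∧
      IsMaxOn (fun y => y ⬝ᵥ A *ᵥ y) (stdSimplex ℝ ι) y) support x)
    {y : ι → ℝ} (hy : support y ⊆ support x) (hy1 : ∑ i, y i = 1)
    (hc : ∃ c, ∀ i ∈ support x, (A *ᵥ y) i = c) : y = x := by
  obtain ⟨⟨hx, hmax⟩, hxmin⟩ := hmin
  obtain ⟨c, hc⟩ := hc
  obtain ⟨c', hc'⟩ := exists_mulVec_eq_const_of_isMaxOn hA hx hmax
  by_contra hne
  have hsupp : support (y - x) ⊆ support x :=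
    (support_sub y x).trans (Set.union_subset hy subset_rfl)
  have hQ : (y - x) ⬝ᵥ A *ᵥ (y - x) = 0 := by
    refine dotProduct_eq_zero_of_sum_eq_zero (c := c - c') ?_ fun i hi => ?_
    · simp [sum_sub_distrib, hy1, hx.2]
    · rw [Matrix.mulVec_sub, Pi.sub_apply, hc i (hsupp hi), hc' i (hsupp hi)]
  obtain ⟨z, hz, hzmax, hzx⟩ := exists_isMaxOn_support_ssubset hA hx hmax
    (sub_ne_zero.mpr hne) (by simp [sum_sub_distrib, hy1, hx.2]) hsupp hQ
  exact hzx.2 (hxmin ⟨hz, hzmax⟩ hzx.1)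

theorem exists_rat_isMaxOn_stdSimplex [Nonempty ι] {A : Matrix ι ι ℝ} (hA : A.IsSymm)
    (hrat : ∀ i j, ∃ q : ℚ, A i j = q) :
    ∃ x ∈ stdSimplex ℝ ι, (∀ i, ∃ q : ℚ, x i = q) ∧
      IsMaxOn (fun y => y ⬝ᵥ A *ᵥ y) (stdSimplex ℝ ι) x := by
  classical
  obtain ⟨x₀, hx₀, hmax₀⟩ := (isCompact_stdSimplex ℝ ι).exists_isMaxOn
    ⟨_, single_mem_stdSimplex ℝ (Classical.arbitrary ι)⟩
    (by fun_prop : Continuous fun y : ι → ℝ => y ⬝ᵥ A *ᵥ y).continuousOn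
  obtain ⟨x, hmin⟩ := exists_minimalFor_of_wellFoundedLT
    (fun y => y ∈ stdSimplex ℝ ι ∧ IsMaxOn (fun y => y ⬝ᵥ A *ᵥ y) (stdSimplex ℝ ι) y) support
    ⟨x₀, hx₀, hmax₀⟩
  obtain ⟨hx, hmax⟩ := hmin.1
  obtain ⟨c, hc⟩ := exists_mulVec_eq_const_of_isMaxOn hA hx hmax
  obtain ⟨π, hπ⟩ := exists_ratLinearMap_apply_ratCast
  have hπx : (fun i => (π (x i) : ℝ)) = x := by
    refine eq_of_minimalFor_isMaxOn hA hmin (fun i hi hxi => hi ?_) ?_ ⟨π c, fun i hi => ?_⟩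
    · simp [hxi]
    · rw [← Rat.cast_sum, ← map_sum, hx.2, ← Rat.cast_one, hπ, Rat.cast_one]
    · rw [mulVec_ratLinearMap_apply π hrat, hc i hi]
  exact ⟨x, hx, fun i => ⟨π (x i), (congrFun hπx i).symm⟩, hmax⟩

theorem stmt7 (d : ℕ) (A : Matrix (Fin (d + 1)) (Fin (d + 1)) ℝ)
    (hsymm : A.IsSymm) (hrat : ∀ i j, ∃ q : ℚ, A i j = q) :
    ∃ x : Fin (d + 1) → ℝ,
      (∑ i, x i = 1) ∧ (∀ i, 0 ≤ x i) ∧ (∀ i, ∃ q : ℚ, x i = q) ∧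
      ∀ y : Fin (d + 1) → ℝ, (∑ i, y i = 1) → (∀ i, 0 ≤ y i) →
        1 / 2 * (y ⬝ᵥ A.mulVec y) ≤ 1 / 2 * (x ⬝ᵥ A.mulVec x) := by
  obtain ⟨x, hx, hxrat, hmax⟩ := exists_rat_isMaxOn_stdSimplex hsymm hrat
  exact ⟨x, hx.2, hx.1, hxrat, fun y hy1 hy0 =>
    mul_le_mul_of_nonneg_left (hmax ⟨hy0, hy1⟩) (by norm_num)⟩
end

section
/- Let $N$ points $x_1, \dots, x_N$ (not necessarily distinct) lie on the unit sphere $S^d \subset \mathbb{R}^{d+1}$. Define the perpendicularity energy $E_\infty = \#\{(i,j) : i < j, \; x_i \cdot x_j = 0\}$. If there is an orthonormal basis $v_1, \dots, v_{d+1}$ of $\mathbb{R}^{d+1}$ such that each $x_i \in \{v_j, -v_j\}$ where $j \equiv i \pmod{d+1}$, then $E_\infty = \sum_{m=0}^{N-1} \lceil \frac{d}{d+1} m \rceil$, and this is the maximum of $E_\infty$ over all configurations of $N$ points on $S^d$. -/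
open scoped RealInnerProductSpace

/-- Number of perpendicular pairs in a configuration of `N` points on the sphere. -/
noncomputable def perpPairs {d N : ℕ} (x : Fin N → EuclideanSpace ℝ (Fin (d + 1))) : ℕ :=
  Set.ncard {p : Fin N × Fin N | p.1 < p.2 ∧ ⟪x p.1, x p.2⟫ = 0}

/-! The perpendicularity relation of a configuration is a graph; an orthonormal clique has at most
`d + 1` members, so the graph has no `(d + 2)`-clique and Turán's theorem bounds its edge count by
that of the Turán graph `T(N, d + 1)`. For the configuration built on an orthonormal basis,
`x i ⊥ x j` exactly when `i ≢ j [MOD d + 1]`, so its perpendicularity graph *is* `T(N, d + 1)`.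
Counting the edges of `T(N, d + 1)` from each vertex `m` back to the smaller ones gives
`m - ⌊m / (d + 1)⌋ = ⌈d m / (d + 1)⌉`. -/

open Finset

theorem Nat.card_filter_range_mod_ne {r : ℕ} (hr : 0 < r) (m : ℕ) :
    #{k ∈ range m | k % r ≠ m % r} = m - m / r := by
  have hmod : #{k ∈ range m | k % r = m % r} = m / r := by
    have := Nat.count_modEq_card (b := m) hr m
    rw [if_neg (lt_irrefl _), add_zero, Nat.count_eq_card_filter_range] at this
    exact this
  have hsplit := card_filter_add_card_filter_not (s := range m) (p := fun k => k % r = m % r)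
  simp only [card_range, hmod, ← ne_eq] at hsplit
  omega

namespace SimpleGraph

theorem ncard_setOf_lt_adj {V : Type*} [LinearOrder V] (G : SimpleGraph V) :
    {p : V × V | p.1 < p.2 ∧ G.Adj p.1 p.2}.ncard = G.edgeSet.ncard := by
  refine Set.ncard_congr (fun p _ => s(p.1, p.2)) (fun p hp => hp.2) ?_ ?_
  · rintro ⟨a, b⟩ ⟨c, d⟩ ⟨hab, -⟩ ⟨hcd, -⟩ h
    rcases Sym2.eq_iff.1 h with h | ⟨rfl, rfl⟩
    · exact Prod.ext h.1 h.2
    · exact absurd hab hcd.not_gt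
  · intro e he
    induction e with | _ a b
    rcases (G.ne_of_adj he).lt_or_gt with h | h
    · exact ⟨(a, b), ⟨h, he⟩, rfl⟩
    · exact ⟨(b, a), ⟨h, he.symm⟩, Sym2.eq_swap⟩

theorem ncard_edgeSet_turanGraph {n r : ℕ} (hr : 0 < r) :
    (turanGraph n r).edgeSet.ncard = ∑ m ∈ range n, (m - m / r) := by
  classical
  rw [← ncard_setOf_lt_adj, Set.ncard_eq_toFinset_card', Set.toFinset_ofPred, card_filter,
    Fintype.sum_prod_type_right]
  simp only [turanGraph_adj, Fin.lt_def]
  rw [Fin.sum_univ_eq_sum_range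
    (fun m => ∑ i : Fin n, if (i : ℕ) < m ∧ (i : ℕ) % r ≠ m % r then 1 else 0)]
  refine sum_congr rfl fun m hm => ?_
  rw [Fin.sum_univ_eq_sum_range (fun i => if i < m ∧ i % r ≠ m % r then 1 else 0),
    ← card_filter, ← Nat.card_filter_range_mod_ne hr]
  congr 1
  ext k
  simp only [mem_filter, mem_range] at hm ⊢
  omega

end SimpleGraph

theorem Orthonormal.inner_eq_zero_iff {ι E : Type*} [NormedAddCommGroup E] [InnerProductSpace ℝ E]
    {v : ι → E} (hv : Orthonormal ℝ v) {a b : ι} : ⟪v a, v b⟫ = 0 ↔ a ≠ b := by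
  refine ⟨fun h hab => ?_, hv.inner_eq_zero⟩
  subst hab
  simp [hv.norm_eq_one] at h

theorem Orthonormal.inner_eq_zero_iff_of_eq_or_eq_neg {ι E : Type*} [NormedAddCommGroup E]
    [InnerProductSpace ℝ E] {v : ι → E} (hv : Orthonormal ℝ v) {a b : ι} {x y : E}
    (hx : x = v a ∨ x = -v a) (hy : y = v b ∨ y = -v b) : ⟪x, y⟫ = 0 ↔ a ≠ b := by
  rw [← hv.inner_eq_zero_iff]
  rcases hx with rfl | rfl <;> rcases hy with rfl | rfl <;>
    simp only [inner_neg_left, inner_neg_right, neg_neg, neg_eq_zero]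

section PerpGraph

variable {ι E : Type*} [NormedAddCommGroup E] [InnerProductSpace ℝ E]

def perpGraph (y : ι → E) : SimpleGraph ι where
  Adj i j := i ≠ j ∧ ⟪y i, y j⟫ = 0
  symm := ⟨fun _ _ h => ⟨h.1.symm, by rw [real_inner_comm]; exact h.2⟩⟩
  loopless := ⟨fun _ h => h.1 rfl⟩

theorem perpGraph_adj {y : ι → E} {i j : ι} : (perpGraph y).Adj i j ↔ i ≠ j ∧ ⟪y i, y j⟫ = 0 :=
  Iff.rfl

theorem perpGraph_cliqueFree [FiniteDimensional ℝ E] {y : ι → E} (hy : ∀ i, y i ≠ 0) :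
    (perpGraph y).CliqueFree (Module.finrank ℝ E + 1) := by
  intro t ht
  have hli : LinearIndependent ℝ (fun i : t => y i) :=
    linearIndependent_of_ne_zero_of_inner_eq_zero (fun i => hy i)
      fun i j hij => (ht.1 i.2 j.2 (Subtype.coe_injective.ne hij)).2
  have := hli.fintype_card_le_finrank
  rw [Fintype.card_coe, ht.2] at this
  omega

theorem perpGraph_eq_turanGraph {N r : ℕ} (hr : 0 < r) {x : Fin N → E} {v : Fin r → E}
    (hv : Orthonormal ℝ v)
    (hx : ∀ (i : Fin N) (j : Fin r), (i : ℕ) % r = j → x i = v j ∨ x i = -v j) :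
    perpGraph x = SimpleGraph.turanGraph N r := by
  ext i j
  rw [perpGraph_adj, SimpleGraph.turanGraph_adj,
    hv.inner_eq_zero_iff_of_eq_or_eq_neg (hx i ⟨i % r, Nat.mod_lt _ hr⟩ rfl)
      (hx j ⟨j % r, Nat.mod_lt _ hr⟩ rfl)]
  simp only [Fin.ne_iff_vne]
  exact and_iff_right_of_imp (ne_of_apply_ne (· % r))

theorem ncard_setOf_lt_inner_eq_zero {N : ℕ} (y : Fin N → E) :
    {p : Fin N × Fin N | p.1 < p.2 ∧ ⟪y p.1, y p.2⟫ = 0}.ncard = (perpGraph y).edgeSet.ncard := by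
  rw [← SimpleGraph.ncard_setOf_lt_adj]
  congr with p
  exact and_congr_right fun h => (and_iff_right h.ne).symm

end PerpGraph

theorem Int.ceil_div_add_one_mul_natCast (d m : ℕ) :
    ⌈(d : ℚ) / (d + 1) * m⌉ = m - (m / (d + 1) : ℕ) := by
  have h : (d : ℚ) / (d + 1) * m = -((m : ℚ) / ((d + 1 : ℕ) : ℚ)) + ((m : ℤ) : ℚ) := by
    push_cast
    field_simp
    ring
  rw [h, Int.ceil_add_intCast, Int.ceil_neg, Rat.floor_natCast_div_natCast]
  push_cast
  ring

theorem stmt13_general (d N : ℕ) (x : Fin N → EuclideanSpace ℝ (Fin (d + 1)))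
    (v : Fin (d + 1) → EuclideanSpace ℝ (Fin (d + 1))) (hv : Orthonormal ℝ v)
    (hcfg : ∀ (i : Fin N) (j : Fin (d + 1)), (i : ℕ) % (d + 1) = (j : ℕ) →
      x i = v j ∨ x i = -v j) :
    (perpPairs x : ℤ) = ∑ m ∈ Finset.range N, ⌈(d : ℚ) / (d + 1) * m⌉ ∧
    ∀ y : Fin N → EuclideanSpace ℝ (Fin (d + 1)), (∀ i, ‖y i‖ = 1) →
      perpPairs y ≤ perpPairs x := by
  have hturan := perpGraph_eq_turanGraph d.succ_pos hv hcfg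
  unfold perpPairs
  refine ⟨?_, fun y hy => ?_⟩
  · rw [ncard_setOf_lt_inner_eq_zero, hturan, SimpleGraph.ncard_edgeSet_turanGraph d.succ_pos,
      Nat.cast_sum]
    refine sum_congr rfl fun m _ => ?_
    rw [Int.ceil_div_add_one_mul_natCast, Nat.cast_sub (Nat.div_le_self _ _)]
  · have hclique : (perpGraph y).CliqueFree (d + 1 + 1) := by
      have hfree :=
        perpGraph_cliqueFree fun i => ne_zero_of_norm_ne_zero ((hy i).trans_ne one_ne_zero)
      rwa [finrank_euclideanSpace_fin] at hfree
    classical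
    rw [ncard_setOf_lt_inner_eq_zero, ncard_setOf_lt_inner_eq_zero, hturan,
      Set.ncard_eq_toFinset_card', Set.ncard_eq_toFinset_card']
    exact (SimpleGraph.isTuranMaximal_turanGraph d.succ_pos).2 hclique

theorem stmt13 (d N : ℕ) (x : Fin N → EuclideanSpace ℝ (Fin (d + 1)))
    (hx : ∀ i, ‖x i‖ = 1)
    (v : Fin (d + 1) → EuclideanSpace ℝ (Fin (d + 1))) (hv : Orthonormal ℝ v)
    (hcfg : ∀ (i : Fin N) (j : Fin (d + 1)), (i : ℕ) % (d + 1) = (j : ℕ) →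
      x i = v j ∨ x i = -v j) :
    (perpPairs x : ℤ) = ∑ m ∈ Finset.range N, ⌈(d : ℚ) / (d + 1) * m⌉ ∧
    ∀ y : Fin N → EuclideanSpace ℝ (Fin (d + 1)), (∀ i, ‖y i‖ = 1) →
      perpPairs y ≤ perpPairs x :=
  stmt13_general d N x v hv hcfg
end

section
/- Let $\mu$ be a finitely supported probability measure on $S^d$ and define $E_\infty(\mu) = \frac{1}{2}\sum_{x, y \in \mathrm{spt}(\mu), \; x \cdot y = 0} \mu(\{x\})\mu(\{y\})$. Then $E_\infty(\mu) \le \frac{d}{2(d+1)}$, with equality if and only if there exists an orthonormal basis $v_1, \dots, v_{d+1}$ of $\mathbb{R}^{d+1}$ and weights $a_i, b_i \ge 0$ with $a_i + b_i = \frac{1}{d+1}$ such that $\mu = \sum_{i=1}^{d+1} (a_i \delta_{v_i} + b_i \delta_{-v_i})$. -/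
open scoped RealInnerProductSpace Classical

/-!
Write `N(x)` for the `w`-mass of the support points not orthogonal to `x`; then
`2 E∞(w) = 1 - ∑ₓ w(x) N(x)`. For unit vectors `⟪x, y⟫² ≤ 1`, with equality only for `y = ±x`,
so `∑ₓ w(x) N(x)` dominates the frame potential `∑_{x,y} w(x) w(y) ⟪x, y⟫²`. The Hilbert–Schmidt
distance between the frame operator `S = ∑ₓ w(x) x ⊗ x` and `(tr S / n) · id` shows that the
frame potential is at least `(tr S)² / n = 1 / n` (here `n = d + 1`), with equality only for the
tight frame `S = id / n`. At the maximum both inequalities are equalities: any two support points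
are orthogonal or antipodal, and `⟪S x, x⟫ = 1 / n` at a support point `x` says
`w(x) + w(-x) = 1 / n`. One point from each antipodal pair then gives the orthonormal basis.
-/

open Finset

section FramePotential

variable {E : Type*} [NormedAddCommGroup E] [InnerProductSpace ℝ E]

noncomputable def frameOp (s : Finset E) (f : E → ℝ) : E →L[ℝ] E :=
  ∑ x ∈ s, f x • InnerProductSpace.rankOne ℝ x x

noncomputable def framePotential (s : Finset E) (f : E → ℝ) : ℝ :=
  ∑ x ∈ s, ∑ y ∈ s, f x * f y * ⟪x, y⟫ ^ 2

variable (s : Finset E) (f : E → ℝ)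

lemma frameOp_apply (u : E) : frameOp s f u = ∑ x ∈ s, (f x * ⟪x, u⟫) • x := by
  simp [frameOp, mul_smul]

lemma inner_frameOp_self (u : E) : ⟪frameOp s f u, u⟫ = ∑ x ∈ s, f x * ⟪x, u⟫ ^ 2 := by
  rw [frameOp_apply, sum_inner]
  refine sum_congr rfl fun x _ => ?_
  rw [real_inner_smul_left]
  ring

namespace OrthonormalBasis

variable {ι : Type*} [Fintype ι] (b : OrthonormalBasis ι ℝ E)

lemma sum_inner_frameOp : ∑ i, ⟪frameOp s f (b i), b i⟫ = ∑ x ∈ s, f x * ‖x‖ ^ 2 := by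
  simp_rw [inner_frameOp_self]
  rw [sum_comm]
  refine sum_congr rfl fun x _ => ?_
  rw [← mul_sum, ← real_inner_self_eq_norm_sq, ← b.sum_inner_mul_inner]
  simp_rw [sq, real_inner_comm x]

lemma sum_norm_frameOp_sq : ∑ i, ‖frameOp s f (b i)‖ ^ 2 = framePotential s f := by
  have h : ∀ i, ‖frameOp s f (b i)‖ ^ 2 =
      ∑ x ∈ s, ∑ y ∈ s, f x * f y * ⟪x, y⟫ * (⟪x, b i⟫ * ⟪b i, y⟫) := by
    intro i
    rw [← real_inner_self_eq_norm_sq, frameOp_apply, sum_inner]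
    refine sum_congr rfl fun x _ => ?_
    rw [inner_sum]
    refine sum_congr rfl fun y _ => ?_
    rw [real_inner_smul_left, real_inner_smul_right, real_inner_comm (b i) y]
    ring
  simp_rw [h]
  rw [sum_comm]
  refine sum_congr rfl fun x _ => ?_
  rw [sum_comm]
  refine sum_congr rfl fun y _ => ?_
  rw [← mul_sum, b.sum_inner_mul_inner]
  ring

lemma sum_norm_frameOp_sub_smul_sq (c : ℝ) :
    ∑ i, ‖frameOp s f (b i) - c • b i‖ ^ 2 =
      framePotential s f - 2 * c * ∑ x ∈ s, f x * ‖x‖ ^ 2 + Fintype.card ι * c ^ 2 := by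
  simp_rw [norm_sub_sq_real, real_inner_smul_right, norm_smul, b.orthonormal.1, sum_add_distrib,
    sum_sub_distrib, sum_norm_frameOp_sq, ← mul_sum, sum_inner_frameOp]
  simp only [Real.norm_eq_abs, mul_one, sq_abs, sum_const, card_univ, nsmul_eq_mul, add_left_inj,
    sub_right_inj]
  ring

end OrthonormalBasis

variable [FiniteDimensional ℝ E]

lemma sum_norm_frameOp_sub_sq_eq :
    ∑ i, ‖frameOp s f (stdOrthonormalBasis ℝ E i) -
        ((∑ x ∈ s, f x * ‖x‖ ^ 2) / Module.finrank ℝ E) • stdOrthonormalBasis ℝ E i‖ ^ 2 =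
      framePotential s f - (∑ x ∈ s, f x * ‖x‖ ^ 2) ^ 2 / Module.finrank ℝ E := by
  rw [OrthonormalBasis.sum_norm_frameOp_sub_smul_sq, Fintype.card_fin]
  rcases eq_or_ne (Module.finrank ℝ E : ℝ) 0 with h | h
  · simp [h]
  · field_simp
    ring

theorem sq_sum_div_finrank_le_framePotential :
    (∑ x ∈ s, f x * ‖x‖ ^ 2) ^ 2 / Module.finrank ℝ E ≤ framePotential s f := by
  rw [← sub_nonneg, ← sum_norm_frameOp_sub_sq_eq]
  exact sum_nonneg fun i _ => sq_nonneg _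

theorem sum_mul_inner_sq_of_framePotential_eq
    (h : framePotential s f = (∑ x ∈ s, f x * ‖x‖ ^ 2) ^ 2 / Module.finrank ℝ E) (u : E) :
    ∑ x ∈ s, f x * ⟪x, u⟫ ^ 2 =
      (∑ x ∈ s, f x * ‖x‖ ^ 2) / Module.finrank ℝ E * ‖u‖ ^ 2 := by
  set c := (∑ x ∈ s, f x * ‖x‖ ^ 2) / Module.finrank ℝ E
  have hzero := sum_norm_frameOp_sub_sq_eq s f
  rw [h, sub_self, sum_eq_zero_iff_of_nonneg fun i _ => sq_nonneg _] at hzero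
  have hF : frameOp s f = c • ContinuousLinearMap.id ℝ E := by
    refine ContinuousLinearMap.coe_injective ((stdOrthonormalBasis ℝ E).toBasis.ext fun i => ?_)
    simpa [sub_eq_zero] using hzero i (mem_univ i)
  rw [← inner_frameOp_self, hF]
  simp [real_inner_smul_left]

end FramePotential

section Finsupp

lemma Finsupp.sum_support_ite_eq {α : Type*} (w : α →₀ ℝ) (a : α) :
    ∑ x ∈ w.support, (if a = x then w a else 0) = w a := by
  rw [Finset.sum_ite_eq]
  split_ifs with h
  · rfl
  · exact (Finsupp.notMem_support_iff.1 h).symm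

lemma sum_mul_norm_sq_of_norm_eq_one {E : Type*} [SeminormedAddCommGroup E] {w : E →₀ ℝ}
    (hunit : ∀ x ∈ w.support, ‖x‖ = 1) :
    ∑ x ∈ w.support, w x * ‖x‖ ^ 2 = ∑ x ∈ w.support, w x :=
  sum_congr rfl fun x hx => by rw [hunit x hx, one_pow, mul_one]

variable {α ι : Type*}

lemma Finsupp.exists_eq_or_eq_neg_of_mem_support_sum [Neg α] [Fintype ι] {v : ι → α}
    {a b : ι → ℝ} {x : α}
    (hx : x ∈ (∑ j, (Finsupp.single (v j) (a j) + Finsupp.single (-v j) (b j))).support) :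
    ∃ i, x = v i ∨ x = -v i := by
  by_contra h
  push Not at h
  refine Finsupp.mem_support_iff.1 hx ?_
  simp [Finsupp.finsetSum_apply, fun i => (h i).1.symm, fun i => (h i).2.symm]

lemma Finsupp.eq_sum_single_add_single_neg [InvolutiveNeg α] {w : α →₀ ℝ} {T : Finset α}
    (hcov : ∀ x ∈ w.support, ∃ t ∈ T, x = t ∨ x = -t) (hneg : ∀ t ∈ T, -t ∉ T) :
    w = ∑ t ∈ T, (Finsupp.single t (w t) + Finsupp.single (-t) (w (-t))) := by
  ext x
  simp only [Finsupp.finsetSum_apply, Finsupp.add_apply, Finsupp.single_apply, sum_add_distrib,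
    neg_eq_iff_eq_neg (b := x)]
  rw [Finset.sum_ite_eq', Finset.sum_ite_eq', neg_neg]
  by_cases hx : x ∈ w.support
  · obtain ⟨t, ht, rfl | rfl⟩ := hcov x hx
    · simp [ht, hneg _ ht]
    · simp [ht, hneg _ ht]
  · simp [Finsupp.notMem_support_iff.1 hx]

end Finsupp

section UnitVectors

variable {E : Type*} [NormedAddCommGroup E] [InnerProductSpace ℝ E] {x y : E}

lemma ne_neg_of_norm_eq_one (hx : ‖x‖ = 1) : x ≠ -x := by
  intro h
  have : ⟪x, x⟫ = ⟪x, -x⟫ := by rw [← h]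
  rw [inner_neg_right, (inner_eq_one_iff_of_norm_eq_one hx hx).2 rfl] at this
  norm_num at this

lemma inner_sq_le_ite_of_norm_eq_one (hx : ‖x‖ = 1) (hy : ‖y‖ = 1) :
    ⟪x, y⟫ ^ 2 ≤ if ⟪x, y⟫ = 0 then 0 else 1 := by
  split_ifs with h
  · simp [h]
  · rw [sq_le_one_iff_abs_le_one]
    simpa [hx, hy] using abs_real_inner_le_norm x y

lemma eq_or_eq_neg_of_inner_sq_eq_one (hx : ‖x‖ = 1) (hy : ‖y‖ = 1) (h : ⟪x, y⟫ ^ 2 = 1) :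
    y = x ∨ y = -x := by
  rcases sq_eq_one_iff.1 h with h | h
  · exact Or.inl ((inner_eq_one_iff_of_norm_eq_one hx hy).1 h).symm
  · rw [inner_eq_neg_one_iff_of_norm_eq_one hx hy] at h
    exact Or.inr (by rw [h, neg_neg])

end UnitVectors

section OrthEnergy

variable {E : Type*} [NormedAddCommGroup E] [InnerProductSpace ℝ E]

noncomputable def orthEnergy (w : E →₀ ℝ) : ℝ :=
  ∑ x ∈ w.support, ∑ y ∈ w.support, if ⟪x, y⟫ = 0 then w x * w y else 0

noncomputable def nonorthMass (w : E →₀ ℝ) (x : E) : ℝ :=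
  ∑ y ∈ w.support, if ⟪x, y⟫ = 0 then 0 else w y

def OrthoOrAntipodal (S : Set E) : Prop :=
  ∀ x ∈ S, ∀ y ∈ S, ⟪x, y⟫ ≠ 0 → y = x ∨ y = -x

variable {w : E →₀ ℝ}

lemma orthEnergy_add_sum_mul_nonorthMass (w : E →₀ ℝ) :
    orthEnergy w + ∑ x ∈ w.support, w x * nonorthMass w x = (∑ x ∈ w.support, w x) ^ 2 := by
  rw [orthEnergy, ← sum_add_distrib, sq, sum_mul_sum]
  refine sum_congr rfl fun x _ => ?_
  rw [nonorthMass, mul_sum, ← sum_add_distrib]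
  refine sum_congr rfl fun y _ => ?_
  split_ifs <;> ring

lemma sum_mul_nonorthMass_sub_framePotential :
    ∑ x ∈ w.support, w x * nonorthMass w x - framePotential w.support w =
      ∑ x ∈ w.support, ∑ y ∈ w.support,
        w x * w y * ((if ⟪x, y⟫ = 0 then 0 else 1) - ⟪x, y⟫ ^ 2) := by
  rw [framePotential, ← sum_sub_distrib]
  refine sum_congr rfl fun x _ => ?_
  rw [nonorthMass, mul_sum, ← sum_sub_distrib]
  refine sum_congr rfl fun y _ => ?_
  split_ifs <;> ring

section UnitSupport

variable (hunit : ∀ x ∈ w.support, ‖x‖ = 1)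
include hunit

lemma mul_mul_ite_sub_inner_sq_nonneg (hpos : ∀ x, 0 ≤ w x) {x y : E} (hx : x ∈ w.support)
    (hy : y ∈ w.support) : 0 ≤ w x * w y * ((if ⟪x, y⟫ = 0 then 0 else 1) - ⟪x, y⟫ ^ 2) :=
  mul_nonneg (mul_nonneg (hpos x) (hpos y))
    (sub_nonneg.2 (inner_sq_le_ite_of_norm_eq_one (hunit x hx) (hunit y hy)))

lemma framePotential_le_sum_mul_nonorthMass (hpos : ∀ x, 0 ≤ w x) :
    framePotential w.support w ≤ ∑ x ∈ w.support, w x * nonorthMass w x := by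
  rw [← sub_nonneg, sum_mul_nonorthMass_sub_framePotential]
  exact sum_nonneg fun x hx => sum_nonneg fun y hy =>
    mul_mul_ite_sub_inner_sq_nonneg hunit hpos hx hy

lemma orthoOrAntipodal_of_framePotential_eq (hpos : ∀ x, 0 ≤ w x)
    (h : framePotential w.support w = ∑ x ∈ w.support, w x * nonorthMass w x) :
    OrthoOrAntipodal (w.support : Set E) := by
  intro x hx y hy hxy
  have hrow : ∀ x ∈ w.support, ∀ y ∈ w.support,
      0 ≤ w x * w y * ((if ⟪x, y⟫ = 0 then 0 else 1) - ⟪x, y⟫ ^ 2) :=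
    fun x hx y hy => mul_mul_ite_sub_inner_sq_nonneg hunit hpos hx hy
  rw [eq_comm, ← sub_eq_zero, sum_mul_nonorthMass_sub_framePotential,
    sum_eq_zero_iff_of_nonneg fun x hx => sum_nonneg (hrow x hx)] at h
  have hterm := (sum_eq_zero_iff_of_nonneg (hrow x hx)).1 (h x hx) y hy
  rw [if_neg hxy, mul_eq_zero, mul_eq_zero, sub_eq_zero] at hterm
  rcases hterm with (h0 | h0) | h1
  · exact absurd h0 (Finsupp.mem_support_iff.1 hx)
  · exact absurd h0 (Finsupp.mem_support_iff.1 hy)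
  · exact eq_or_eq_neg_of_inner_sq_eq_one (hunit x hx) (hunit y hy) h1.symm

lemma OrthoOrAntipodal.nonorthMass_eq (hS : OrthoOrAntipodal (w.support : Set E))
    {x : E} (hx : x ∈ w.support) : nonorthMass w x = w x + w (-x) := by
  have hxx : ⟪x, x⟫ = 1 := (inner_eq_one_iff_of_norm_eq_one (hunit x hx) (hunit x hx)).2 rfl
  rw [nonorthMass, ← Finsupp.sum_support_ite_eq w x, ← Finsupp.sum_support_ite_eq w (-x),
    ← sum_add_distrib]
  refine sum_congr rfl fun y hy => ?_
  by_cases hxy : ⟪x, y⟫ = 0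
  · have hyx : x ≠ y := by rintro rfl; rw [hxx] at hxy; exact one_ne_zero hxy
    have hyx' : -x ≠ y := by
      rintro rfl
      rw [inner_neg_right, hxx] at hxy
      exact neg_ne_zero.2 one_ne_zero hxy
    rw [if_pos hxy, if_neg hyx, if_neg hyx', add_zero]
  · rcases hS x hx y hy hxy with rfl | rfl
    · rw [if_neg hxy, if_pos rfl, if_neg (ne_neg_of_norm_eq_one (hunit y hy)).symm, add_zero]
    · rw [if_neg hxy, if_neg (ne_neg_of_norm_eq_one (hunit x hx)), if_pos rfl, zero_add]

lemma OrthoOrAntipodal.sum_mul_inner_sq_eq_nonorthMass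
    (hS : OrthoOrAntipodal (w.support : Set E)) {x : E} (hx : x ∈ w.support) :
    ∑ y ∈ w.support, w y * ⟪y, x⟫ ^ 2 = nonorthMass w x := by
  have hxx : ⟪x, x⟫ = 1 := (inner_eq_one_iff_of_norm_eq_one (hunit x hx) (hunit x hx)).2 rfl
  refine sum_congr rfl fun y hy => ?_
  by_cases hxy : ⟪x, y⟫ = 0
  · simp [hxy, real_inner_comm x y]
  · rcases hS x hx y hy hxy with rfl | rfl
    · rw [if_neg hxy, hxx, one_pow, mul_one]
    · rw [if_neg hxy, inner_neg_left, hxx, neg_one_sq, mul_one]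

end UnitSupport

section FiniteDimensional

variable [FiniteDimensional ℝ E] (hunit : ∀ x ∈ w.support, ‖x‖ = 1)
  (hprob : ∑ x ∈ w.support, w x = 1)
include hunit hprob

lemma one_div_finrank_le_framePotential :
    1 / (Module.finrank ℝ E : ℝ) ≤ framePotential w.support w := by
  simpa [sum_mul_norm_sq_of_norm_eq_one hunit, hprob] using
    sq_sum_div_finrank_le_framePotential w.support w

theorem orthEnergy_le (hpos : ∀ x, 0 ≤ w x) :
    orthEnergy w ≤ 1 - 1 / Module.finrank ℝ E := by
  have h := orthEnergy_add_sum_mul_nonorthMass w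
  rw [hprob, one_pow] at h
  linarith [one_div_finrank_le_framePotential hunit hprob,
    framePotential_le_sum_mul_nonorthMass hunit hpos]

theorem orthEnergy_eq_iff (hpos : ∀ x, 0 ≤ w x) :
    orthEnergy w = 1 - 1 / Module.finrank ℝ E ↔
      OrthoOrAntipodal (w.support : Set E) ∧
        ∀ x ∈ w.support, w x + w (-x) = 1 / Module.finrank ℝ E := by
  have h1 := orthEnergy_add_sum_mul_nonorthMass w
  rw [hprob, one_pow] at h1
  constructor
  · intro h
    have h2 := one_div_finrank_le_framePotential hunit hprob
    have h3 := framePotential_le_sum_mul_nonorthMass hunit hpos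
    have hS := orthoOrAntipodal_of_framePotential_eq hunit hpos (by linarith)
    refine ⟨hS, fun x hx => ?_⟩
    have htight := sum_mul_inner_sq_of_framePotential_eq w.support w
      (by rw [sum_mul_norm_sq_of_norm_eq_one hunit, hprob]; linarith) x
    rwa [sum_mul_norm_sq_of_norm_eq_one hunit, hprob, hunit x hx,
      hS.sum_mul_inner_sq_eq_nonorthMass hunit hx, hS.nonorthMass_eq hunit hx, one_pow,
      mul_one] at htight
  · rintro ⟨hS, hmass⟩
    have : ∑ x ∈ w.support, w x * nonorthMass w x = 1 / Module.finrank ℝ E := by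
      rw [sum_congr rfl fun x hx => by rw [hS.nonorthMass_eq hunit hx, hmass x hx], ← sum_mul,
        hprob, one_mul]
    linarith

end FiniteDimensional

end OrthEnergy

section AntipodalPairs

variable {E : Type*} [NormedAddCommGroup E] [InnerProductSpace ℝ E]

lemma OrthoOrAntipodal.exists_pairwise_orthogonal {S : Finset E}
    (hS : OrthoOrAntipodal (S : Set E)) :
    ∃ T ⊆ S, (T : Set E).Pairwise (fun x y => ⟪x, y⟫ = 0) ∧
      ∀ x ∈ S, ∃ t ∈ T, x = t ∨ x = -t := by
  induction S using Finset.induction_on with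
  | empty => exact ⟨∅, subset_refl _, by simp, by simp⟩
  | insert a S _ ih =>
    obtain ⟨T, hTS, hT, hcov⟩ :=
      ih fun x hx y hy => hS x (mem_insert_of_mem hx) y (mem_insert_of_mem hy)
    by_cases horth : ∀ t ∈ T, ⟪a, t⟫ = 0
    · refine ⟨insert a T, insert_subset_insert a hTS, ?_, fun x hx => ?_⟩
      · rw [coe_insert]
        exact hT.insert fun t ht _ => ⟨horth t ht, by rw [real_inner_comm]; exact horth t ht⟩
      · rcases mem_insert.1 hx with rfl | hx
        · exact ⟨x, mem_insert_self x T, Or.inl rfl⟩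
        · obtain ⟨t, ht, hxt⟩ := hcov x hx
          exact ⟨t, mem_insert_of_mem ht, hxt⟩
    · push Not at horth
      obtain ⟨t, ht, hat⟩ := horth
      refine ⟨T, hTS.trans (subset_insert a S), hT, fun x hx => ?_⟩
      rcases mem_insert.1 hx with rfl | hx
      · exact ⟨t, ht, hS t (mem_insert_of_mem (hTS ht)) x (mem_insert_self x S)
          (by rwa [real_inner_comm])⟩
      · exact hcov x hx

lemma OrthoOrAntipodal.exists_orthonormal_eq_sum {w : E →₀ ℝ} {n : ℕ}
    (hS : OrthoOrAntipodal (w.support : Set E)) (hunit : ∀ x ∈ w.support, ‖x‖ = 1)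
    (hprob : ∑ x ∈ w.support, w x = 1) (hmass : ∀ x ∈ w.support, w x + w (-x) = 1 / n) :
    ∃ v : Fin n → E, Orthonormal ℝ v ∧ (∀ i, w (v i) + w (-v i) = 1 / n) ∧
      w = ∑ i, (Finsupp.single (v i) (w (v i)) + Finsupp.single (-v i) (w (-v i))) := by
  obtain ⟨T, hTS, hT, hcov⟩ := hS.exists_pairwise_orthogonal
  have hTunit : ∀ t ∈ T, ‖t‖ = 1 := fun t ht => hunit t (hTS ht)
  have hTmass : ∀ t ∈ T, w t + w (-t) = 1 / n := fun t ht => hmass t (hTS ht)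
  have hneg : ∀ t ∈ T, -t ∉ T := by
    intro t ht ht'
    have h : ⟪t, -t⟫ = 0 := hT ht ht' (ne_neg_of_norm_eq_one (hTunit t ht))
    rw [inner_neg_right, (inner_eq_one_iff_of_norm_eq_one (hTunit t ht) (hTunit t ht)).2 rfl] at h
    norm_num at h
  have hw := Finsupp.eq_sum_single_add_single_neg hcov hneg
  have hcard : T.card = n := by
    have htotal : ∑ x ∈ w.support, w x = ∑ t ∈ T, (w t + w (-t)) := by
      have h := congrArg (Finsupp.liftAddHom fun _ => AddMonoidHom.id ℝ) hw
      simp only [map_sum, map_add, Finsupp.liftAddHom_apply_single, AddMonoidHom.id_apply] at h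
      rwa [Finsupp.liftAddHom_apply] at h
    rw [hprob, sum_congr rfl hTmass, sum_const, nsmul_eq_mul] at htotal
    have hn : (n : ℝ) ≠ 0 := by rintro h; simp [h] at htotal
    field_simp at htotal
    exact_mod_cast htotal.symm
  set e := T.equivFinOfCardEq hcard
  refine ⟨fun i => e.symm i, ⟨fun i => hTunit _ (e.symm i).2, fun i j hij => ?_⟩,
    fun i => hTmass _ (e.symm i).2, ?_⟩
  · exact hT (e.symm i).2 (e.symm j).2 fun h => hij (e.symm.injective (Subtype.ext h))
  · conv_lhs => rw [hw, ← sum_coe_sort T]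
    exact (e.symm.sum_comp _).symm

namespace Orthonormal

variable {ι : Type*} {v : ι → E} (hv : Orthonormal ℝ v)
include hv

lemma neg_ne (i j : ι) : -v i ≠ v j := by
  intro h
  have := orthonormal_iff_ite.1 hv i j
  rw [← h, inner_neg_right, real_inner_self_eq_norm_sq, hv.1 i] at this
  split_ifs at this <;> norm_num at this

variable [Fintype ι] {a b : ι → ℝ}

lemma sum_single_add_single_neg_apply (i : ι) :
    (∑ j, (Finsupp.single (v j) (a j) + Finsupp.single (-v j) (b j))) (v i) = a i := by
  simp [Finsupp.finsetSum_apply, Finsupp.single_apply, hv.linearIndependent.injective.eq_iff,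
    hv.neg_ne]

lemma sum_single_add_single_neg_apply_neg (i : ι) :
    (∑ j, (Finsupp.single (v j) (a j) + Finsupp.single (-v j) (b j))) (-v i) = b i := by
  simp [Finsupp.finsetSum_apply, Finsupp.single_apply, hv.linearIndependent.injective.eq_iff,
    (hv.neg_ne _ _).symm]

variable {w : E →₀ ℝ}
  (hw : w = ∑ j, (Finsupp.single (v j) (a j) + Finsupp.single (-v j) (b j)))
include hw

lemma orthoOrAntipodal_support : OrthoOrAntipodal (w.support : Set E) := by
  intro x hx y hy hxy
  obtain ⟨i, hi⟩ := Finsupp.exists_eq_or_eq_neg_of_mem_support_sum (hw ▸ hx)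
  obtain ⟨j, hj⟩ := Finsupp.exists_eq_or_eq_neg_of_mem_support_sum (hw ▸ hy)
  obtain rfl : i = j := by
    by_contra hij
    apply hxy
    rcases hi with rfl | rfl <;> rcases hj with rfl | rfl <;> simp [hv.2 hij]
  rcases hi with rfl | rfl <;> rcases hj with rfl | rfl <;> simp

lemma exists_apply_add_apply_neg_eq {x : E} (hx : x ∈ w.support) :
    ∃ i, w x + w (-x) = a i + b i := by
  obtain ⟨i, rfl | rfl⟩ := Finsupp.exists_eq_or_eq_neg_of_mem_support_sum (hw ▸ hx)
  · refine ⟨i, ?_⟩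
    rw [hw, hv.sum_single_add_single_neg_apply, hv.sum_single_add_single_neg_apply_neg]
  · refine ⟨i, ?_⟩
    rw [neg_neg, hw, hv.sum_single_add_single_neg_apply, hv.sum_single_add_single_neg_apply_neg,
      add_comm]

end Orthonormal

end AntipodalPairs

theorem stmt15 (d : ℕ) (w : EuclideanSpace ℝ (Fin (d + 1)) →₀ ℝ)
    (hsph : ∀ x ∈ w.support, ‖x‖ = 1)
    (hpos : ∀ x, 0 ≤ w x)
    (hprob : ∑ x ∈ w.support, w x = 1) :
    (1 / 2 * ∑ x ∈ w.support, ∑ y ∈ w.support,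
        if ⟪x, y⟫ = 0 then w x * w y else 0) ≤ (d : ℝ) / (2 * (d + 1)) ∧
    ((1 / 2 * ∑ x ∈ w.support, ∑ y ∈ w.support,
        if ⟪x, y⟫ = 0 then w x * w y else 0) = (d : ℝ) / (2 * (d + 1)) ↔
      ∃ (v : Fin (d + 1) → EuclideanSpace ℝ (Fin (d + 1))) (a b : Fin (d + 1) → ℝ),
        Orthonormal ℝ v ∧
        (∀ i, 0 ≤ a i) ∧ (∀ i, 0 ≤ b i) ∧ (∀ i, a i + b i = 1 / (d + 1)) ∧
        w = ∑ i, (Finsupp.single (v i) (a i) + Finsupp.single (-v i) (b i))) := by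
  have hle := orthEnergy_le hsph hprob hpos
  have hiff := orthEnergy_eq_iff hsph hprob hpos
  rw [finrank_euclideanSpace_fin, Nat.cast_add_one] at hle hiff
  have hbound : (d : ℝ) / (2 * (d + 1)) = 1 / 2 * (1 - 1 / (d + 1)) := by
    field_simp
    ring
  change 1 / 2 * orthEnergy w ≤ _ ∧ (1 / 2 * orthEnergy w = _ ↔ _)
  rw [hbound, mul_right_inj' (by norm_num : (1 / 2 : ℝ) ≠ 0), hiff]
  refine ⟨by linarith, fun ⟨hS, hmass⟩ => ?_, fun ⟨v, a, b, hv, _, _, hab, hw⟩ => ?_⟩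
  · obtain ⟨v, hv, hvmass, hw⟩ :=
      hS.exists_orthonormal_eq_sum (n := d + 1) hsph hprob (by exact_mod_cast hmass)
    exact ⟨v, _, _, hv, fun _ => hpos _, fun _ => hpos _, by exact_mod_cast hvmass, hw⟩
  · refine ⟨hv.orthoOrAntipodal_support hw, fun x hx => ?_⟩
    obtain ⟨i, hi⟩ := hv.exists_apply_add_apply_neg_eq hw hx
    rw [hi, hab]
end

section
/- Let $d \ge 1$ and $n \ge 1$. Then $\max$ over all $(m_1, \dots, m_{d+1}) \in \mathbb{Z}_{\ge 0}^{d+1}$ with $\sum_i m_i = n$ of $\sum_{i < j} m_i m_j$ is attained exactly when each $m_i \in \{\lfloor \frac{n}{d+1} \rfloor, \lceil \frac{n}{d+1} \rceil\}$, and the maximum value equals $\sum_{m=0}^{n-1} \lceil \frac{d}{d+1} m \rceil$. -/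
/-!
Since `2 ∑_{i<j} mᵢ mⱼ = n² - ∑ mᵢ²`, maximizing the pair sum means minimizing `∑ mᵢ²`.
With `q = ⌊n / (d + 1)⌋`, every integer `x` satisfies `x² ≥ (2q + 1) x - q (q + 1)`, with
equality iff `x ∈ {q, q + 1}`, because `(x - q)(x - q - 1) ≥ 0`. Summing, `∑ mᵢ²` is bounded below
by a quantity depending only on `n`, attained exactly by the balanced vectors, and balanced
vectors exist. That bound equals `∑_{j<n} (2⌊j/(d+1)⌋ + 1)`, and `n² = ∑_{j<n} (2j + 1)`, so the
maximum is `∑_{j<n} (j - ⌊j/(d+1)⌋) = ∑_{j<n} ⌈d j/(d+1)⌉`.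
-/

open Finset

section PairProdSum

variable {ι R : Type*} [Fintype ι] [LinearOrder ι]

def pairProdSum [CommSemiring R] (f : ι → R) : R :=
  ∑ p ∈ univ.filter (fun p : ι × ι => p.1 < p.2), f p.1 * f p.2

theorem Nat.cast_pairProdSum [CommSemiring R] (m : ι → ℕ) :
    ((pairProdSum m : ℕ) : R) = pairProdSum fun i => (m i : R) := by
  simp [pairProdSum]

theorem sq_sum_eq_two_mul_pairProdSum_add [CommSemiring R] (f : ι → R) :
    (∑ i, f i) ^ 2 = 2 * pairProdSum f + ∑ i, f i ^ 2 := by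
  have hswap : ∑ p ∈ univ.filter (fun p : ι × ι => p.2 < p.1), f p.1 * f p.2 =
      pairProdSum f :=
    sum_nbij' Prod.swap Prod.swap (by simp) (by simp) (by simp) (by simp) (by simp [mul_comm])
  have hdiag : ∑ p ∈ univ.filter (fun p : ι × ι => p.1 = p.2), f p.1 * f p.2 =
      ∑ i, f i ^ 2 := by
    simp [sum_filter, Fintype.sum_prod_type, sq]
  have htrich : ∀ p : ι × ι, f p.1 * f p.2 = (if p.1 < p.2 then f p.1 * f p.2 else 0) +
      (if p.2 < p.1 then f p.1 * f p.2 else 0) + (if p.1 = p.2 then f p.1 * f p.2 else 0) := by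
    intro p
    rcases lt_trichotomy p.1 p.2 with h | h | h
    · simp [h, h.not_gt, h.ne]
    · simp [h]
    · simp [h, h.not_gt, h.ne']
  rw [sq, sum_mul_sum, ← Fintype.sum_prod_type', Fintype.sum_congr _ _ htrich,
    sum_add_distrib, sum_add_distrib, ← sum_filter, ← sum_filter, ← sum_filter, hswap, hdiag,
    pairProdSum]
  ring

end PairProdSum

theorem Int.sub_mul_sub_add_one_nonneg (x q : ℤ) : 0 ≤ (x - q) * (x - (q + 1)) := by
  rcases le_or_gt x q with h | h
  · exact mul_nonneg_of_nonpos_of_nonpos (by linarith) (by linarith)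
  · exact mul_nonneg (by linarith) (by linarith)

section SumSq

variable {ι : Type*} [Fintype ι] (m : ι → ℤ) (q : ℤ)

theorem sum_sq_eq_add_sum_sub_mul_sub :
    ∑ i, m i ^ 2 = (2 * q + 1) * ∑ i, m i - Fintype.card ι * (q * (q + 1)) +
      ∑ i, (m i - q) * (m i - (q + 1)) := by
  have h : ∀ i, m i ^ 2 = ((2 * q + 1) * m i - q * (q + 1)) + (m i - q) * (m i - (q + 1)) :=
    fun i => by ring
  rw [Fintype.sum_congr _ _ h, sum_add_distrib, sum_sub_distrib, mul_sum, sum_const, card_univ,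
    nsmul_eq_mul]

theorem le_sum_sq : (2 * q + 1) * ∑ i, m i - Fintype.card ι * (q * (q + 1)) ≤ ∑ i, m i ^ 2 := by
  rw [sum_sq_eq_add_sum_sub_mul_sub m q]
  exact le_add_of_nonneg_right (sum_nonneg fun i _ => Int.sub_mul_sub_add_one_nonneg (m i) q)

theorem sum_sq_eq_iff :
    ∑ i, m i ^ 2 = (2 * q + 1) * ∑ i, m i - Fintype.card ι * (q * (q + 1)) ↔
      ∀ i, m i = q ∨ m i = q + 1 := by
  rw [sum_sq_eq_add_sum_sub_mul_sub m q, add_eq_left,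
    sum_eq_zero_iff_of_nonneg fun i _ => Int.sub_mul_sub_add_one_nonneg (m i) q]
  simp [sub_eq_zero]

end SumSq

/-- Adding points one at a time, each to a smallest of `N` classes, the `j`-th point raises
`∑ mᵢ²` by `2 ⌊j / N⌋ + 1`. -/
def balancedSumSq (N n : ℕ) : ℤ :=
  ∑ j ∈ range n, (2 * (j / N : ℕ) + 1 : ℤ)

theorem balancedSumSq_eq (N n : ℕ) :
    balancedSumSq N n = (2 * (n / N : ℕ) + 1) * n - N * ((n / N : ℕ) * ((n / N : ℕ) + 1)) := by
  induction n with
  | zero => simp [balancedSumSq]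
  | succ n ih =>
    rw [balancedSumSq, sum_range_succ, ← balancedSumSq, ih, Nat.succ_div]
    split_ifs with hdvd
    · have hmul : ((n + 1 : ℕ) : ℤ) = N * ((n / N : ℕ) + 1) := by
        rw [← Nat.cast_add_one, ← Nat.cast_mul, ← Nat.succ_div_of_dvd hdvd,
          Nat.mul_div_cancel' hdvd]
      generalize n / N = q at hmul ⊢
      push_cast at hmul ⊢
      linear_combination -2 * hmul
    · generalize n / N = q
      push_cast
      ring

theorem sum_range_two_mul_add_one (n : ℕ) : ∑ j ∈ range n, (2 * (j : ℤ) + 1) = n ^ 2 := by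
  induction n with
  | zero => simp
  | succ n ih => rw [sum_range_succ, ih]; push_cast; ring

section Balanced

variable {ι : Type*} [Fintype ι] {n : ℕ} {m : ι → ℕ}

theorem exists_sum_eq_and_balanced [Nonempty ι] (n : ℕ) :
    ∃ m : ι → ℕ, ∑ i, m i = n ∧
      ∀ i, m i = n / Fintype.card ι ∨ m i = n / Fintype.card ι + 1 := by
  classical
  obtain ⟨s, -, hs⟩ := exists_subset_card_eq (s := univ) (n := n % Fintype.card ι)
    (by simpa using (Nat.mod_lt n Fintype.card_pos).le)
  refine ⟨fun i => n / Fintype.card ι + if i ∈ s then 1 else 0, ?_,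
    fun i => by by_cases hi : i ∈ s <;> simp [hi]⟩
  rw [sum_add_distrib, sum_const, card_univ, smul_eq_mul, sum_boole, filter_mem_eq_inter,
    univ_inter, hs, Nat.cast_id, Nat.div_add_mod]

theorem balancedSumSq_le_sum_sq (hm : ∑ i, m i = n) :
    balancedSumSq (Fintype.card ι) n ≤ ∑ i, (m i : ℤ) ^ 2 := by
  have := le_sum_sq (fun i => (m i : ℤ)) (n / Fintype.card ι : ℕ)
  rwa [← Nat.cast_sum, hm, ← balancedSumSq_eq] at this

theorem sum_sq_eq_balancedSumSq_iff (hm : ∑ i, m i = n) :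
    ∑ i, (m i : ℤ) ^ 2 = balancedSumSq (Fintype.card ι) n ↔
      ∀ i, m i = n / Fintype.card ι ∨ m i = n / Fintype.card ι + 1 := by
  have := sum_sq_eq_iff (fun i => (m i : ℤ)) (n / Fintype.card ι : ℕ)
  rw [← Nat.cast_sum, hm, ← balancedSumSq_eq] at this
  exact_mod_cast this

variable [LinearOrder ι]

theorem two_mul_pairProdSum_eq (hm : ∑ i, m i = n) :
    2 * pairProdSum (fun i => (m i : ℤ)) = n ^ 2 - ∑ i, (m i : ℤ) ^ 2 := by
  rw [← hm, Nat.cast_sum, sq_sum_eq_two_mul_pairProdSum_add]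
  ring

theorem pairProdSum_isMax_iff [Nonempty ι] (hm : ∑ i, m i = n) :
    (∀ m' : ι → ℕ, ∑ i, m' i = n → pairProdSum m' ≤ pairProdSum m) ↔
      ∀ i, m i = n / Fintype.card ι ∨ m i = n / Fintype.card ι + 1 := by
  simp_rw [← sum_sq_eq_balancedSumSq_iff hm, ← Nat.cast_le (α := ℤ), Nat.cast_pairProdSum]
  have hE := two_mul_pairProdSum_eq hm
  have hlower := balancedSumSq_le_sum_sq hm
  constructor
  · intro hmax
    obtain ⟨m₀, hm₀, hbal₀⟩ := exists_sum_eq_and_balanced (ι := ι) n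
    have hle := hmax m₀ hm₀
    have hE₀ := two_mul_pairProdSum_eq hm₀
    have hmin₀ := (sum_sq_eq_balancedSumSq_iff hm₀).2 hbal₀
    linarith
  · intro hmin m' hm'
    have hE' := two_mul_pairProdSum_eq hm'
    have hlower' := balancedSumSq_le_sum_sq hm'
    linarith

theorem pairProdSum_eq_sum_range_of_balanced (hm : ∑ i, m i = n)
    (hbal : ∀ i, m i = n / Fintype.card ι ∨ m i = n / Fintype.card ι + 1) :
    pairProdSum (fun i => (m i : ℤ)) = ∑ j ∈ range n, ((j : ℤ) - (j / Fintype.card ι : ℕ)) := by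
  have h := two_mul_pairProdSum_eq hm
  rw [(sum_sq_eq_balancedSumSq_iff hm).2 hbal, balancedSumSq, ← sum_range_two_mul_add_one,
    ← sum_sub_distrib] at h
  rw [← mul_right_inj' (two_ne_zero (α := ℤ)), h, mul_sum]
  exact sum_congr rfl fun j _ => by ring

end Balanced

theorem ceil_div_add_one_mul (d j : ℕ) :
    ⌈(d : ℚ) / (d + 1) * j⌉ = (j : ℤ) - ((j / (d + 1) : ℕ) : ℤ) := by
  have h : (d : ℚ) / (d + 1) * j = -((j : ℚ) / ((d + 1 : ℕ) : ℚ)) + ((j : ℤ) : ℚ) := by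
    push_cast; field_simp; ring
  rw [h, Int.ceil_add_intCast, Int.ceil_neg, Rat.floor_natCast_div_natCast]
  push_cast; ring

theorem Nat.add_div_add_one_eq (n d : ℕ) :
    (n + d) / (d + 1) = n / (d + 1) + if d + 1 ∣ n then 0 else 1 := by
  by_cases hdvd : d + 1 ∣ n
  · rw [if_pos hdvd, Nat.add_div_of_dvd_right hdvd, Nat.div_eq_of_lt d.lt_add_one]
  · have hmod : n % (d + 1) ≠ 0 := mt Nat.dvd_of_mod_eq_zero hdvd
    rw [if_neg hdvd, Nat.add_div d.add_one_pos, Nat.div_eq_of_lt d.lt_add_one,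
      Nat.mod_eq_of_lt d.lt_add_one, if_pos (show d + 1 ≤ n % (d + 1) + d by omega)]

theorem balanced_iff_eq_floor_or_ceil {ι : Type*} [Fintype ι] {d n : ℕ} {m : ι → ℕ}
    (hcard : Fintype.card ι = d + 1) (hm : ∑ i, m i = n) :
    (∀ i, m i = n / (d + 1) ∨ m i = n / (d + 1) + 1) ↔
      ∀ i, m i = n / (d + 1) ∨ m i = (n + d) / (d + 1) := by
  rw [Nat.add_div_add_one_eq]
  split_ifs with hdvd
  · refine ⟨fun hbal i => Or.inl ?_, fun h i => Or.inl ((h i).elim id id)⟩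
    have hsum : ∑ _i : ι, n / (d + 1) = ∑ i, m i := by
      rw [sum_const, card_univ, hcard, smul_eq_mul, Nat.mul_div_cancel' hdvd, hm]
    refine ((sum_eq_sum_iff_of_le fun i _ => ?_).1 hsum i (mem_univ i)).symm
    rcases hbal i with h | h <;> omega
  · rfl

theorem stmt18_general (d n : ℕ) :
    (∀ m : Fin (d + 1) → ℕ, (∑ i, m i = n) →
      ((∀ m' : Fin (d + 1) → ℕ, (∑ i, m' i = n) →
          (∑ p ∈ Finset.univ.filter (fun p : Fin (d + 1) × Fin (d + 1) => p.1 < p.2),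
            m' p.1 * m' p.2) ≤
          ∑ p ∈ Finset.univ.filter (fun p : Fin (d + 1) × Fin (d + 1) => p.1 < p.2),
            m p.1 * m p.2) ↔
        ∀ i, m i = n / (d + 1) ∨ m i = (n + d) / (d + 1))) ∧
    ∀ m : Fin (d + 1) → ℕ, (∑ i, m i = n) →
      (∀ i, m i = n / (d + 1) ∨ m i = (n + d) / (d + 1)) →
      ((∑ p ∈ Finset.univ.filter (fun p : Fin (d + 1) × Fin (d + 1) => p.1 < p.2),
          m p.1 * m p.2 : ℤ) = ∑ j ∈ Finset.range n, ⌈(d : ℚ) / (d + 1) * j⌉) := by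
  have hcard := Fintype.card_fin (d + 1)
  refine ⟨fun m hm => ?_, fun m hm hbal => ?_⟩
  · have hmax := pairProdSum_isMax_iff hm
    rw [hcard] at hmax
    exact hmax.trans (balanced_iff_eq_floor_or_ceil hcard hm)
  · have hvalue := pairProdSum_eq_sum_range_of_balanced hm
      (by rwa [hcard, balanced_iff_eq_floor_or_ceil hcard hm])
    rw [hcard] at hvalue
    simp_rw [ceil_div_add_one_mul]
    exact hvalue

theorem stmt18 (d n : ℕ) (hd : 1 ≤ d) (hn : 1 ≤ n) :
    (∀ m : Fin (d + 1) → ℕ, (∑ i, m i = n) →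
      ((∀ m' : Fin (d + 1) → ℕ, (∑ i, m' i = n) →
          (∑ p ∈ Finset.univ.filter (fun p : Fin (d + 1) × Fin (d + 1) => p.1 < p.2),
            m' p.1 * m' p.2) ≤
          ∑ p ∈ Finset.univ.filter (fun p : Fin (d + 1) × Fin (d + 1) => p.1 < p.2),
            m p.1 * m p.2) ↔
        ∀ i, m i = n / (d + 1) ∨ m i = (n + d) / (d + 1))) ∧
    ∀ m : Fin (d + 1) → ℕ, (∑ i, m i = n) →
      (∀ i, m i = n / (d + 1) ∨ m i = (n + d) / (d + 1)) →
      ((∑ p ∈ Finset.univ.filter (fun p : Fin (d + 1) × Fin (d + 1) => p.1 < p.2),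
          m p.1 * m p.2 : ℤ) = ∑ j ∈ Finset.range n, ⌈(d : ℚ) / (d + 1) * j⌉) :=
  stmt18_general d n
end
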